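/- arXiv:2009.12863 — 2 statements merged into one kernel-verified Lean document; each statement's English description precedes it below -/
import Mathlib

section
/- If F ∈ C^{J×L} has unit-norm columns and its mutual coherence equals the Welch bound sqrt((L−J)/(J(L−1))), then all off-diagonal entries of the Gram matrix F^H F have the same modulus sqrt((L−J)/(J(L−1))) and F is a tight frame (an equiangular tight frame). -/
open Matrix Finset

/-!
Let `G = Fᴴ F` and `P = F Fᴴ`, and write `‖·‖` for the Frobenius norm. Since `tr (P * P) = ‖G‖²`
and `tr P = ‖F‖² = L`, expanding gives `‖P - (L / J) • 1‖² = ‖G‖² - L² / J`: the frame potential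
`‖G‖²` is at least `L² / J`, with equality exactly for tight frames. On the other hand
`‖G‖² = L + ∑_{ℓ ≠ ℓ'} |G ℓ ℓ'|² ≤ L + L (L - 1) μ²`, and for `μ` the Welch bound the right-hand
side is exactly `L² / J`. Hence both inequalities are equalities: every off-diagonal entry attains
the coherence and `P = (L / J) • 1`.
-/

attribute [local instance] Matrix.frobeniusSeminormedAddCommGroup
  Matrix.frobeniusNormedAddCommGroup

namespace Matrix

variable {m n α 𝕜 : Type*} [Fintype m] [Fintype n]

theorem frobenius_norm_sq [SeminormedAddCommGroup α] (A : Matrix m n α) :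
    ‖A‖ ^ 2 = ∑ i, ∑ j, ‖A i j‖ ^ 2 := by
  change ‖WithLp.toLp 2 fun i => WithLp.toLp 2 fun j => A i j‖ ^ 2 = _
  simp [PiLp.norm_sq_eq_of_L2]

variable [RCLike 𝕜]

omit [Fintype n] in
theorem conjTranspose_mul_self_apply_self (A : Matrix m n 𝕜) (j : n) :
    (Aᴴ * A) j j = ((∑ i, ‖A i j‖ ^ 2 : ℝ) : 𝕜) := by
  simp [mul_apply, RCLike.conj_mul]

theorem trace_conjTranspose_mul_self (A : Matrix m n 𝕜) :
    trace (Aᴴ * A) = ((‖A‖ ^ 2 : ℝ) : 𝕜) := by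
  rw [trace, frobenius_norm_sq, Finset.sum_comm]
  simp only [diag, conjTranspose_mul_self_apply_self]
  push_cast; rfl

theorem frobenius_norm_sq_mul_conjTranspose_sub_smul_one [DecidableEq m] (F : Matrix m n 𝕜) :
    ‖F * Fᴴ - ((‖F‖ ^ 2 / Fintype.card m : ℝ) : 𝕜) • (1 : Matrix m m 𝕜)‖ ^ 2
      = ‖Fᴴ * F‖ ^ 2 - ‖F‖ ^ 4 / Fintype.card m := by
  set t : ℝ := ‖F‖ ^ 2 / Fintype.card m
  have hS : (F * Fᴴ - (t : 𝕜) • (1 : Matrix m m 𝕜))ᴴ = F * Fᴴ - (t : 𝕜) • 1 := by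
    simp
  have hP : trace (F * Fᴴ) = ((‖F‖ ^ 2 : ℝ) : 𝕜) := by
    simpa [frobenius_norm_conjTranspose] using trace_conjTranspose_mul_self Fᴴ
  have hPP : trace (F * Fᴴ * (F * Fᴴ)) = ((‖Fᴴ * F‖ ^ 2 : ℝ) : 𝕜) := by
    rw [← trace_conjTranspose_mul_self, conjTranspose_mul, conjTranspose_conjTranspose,
      Matrix.mul_assoc, trace_mul_comm]
    simp only [Matrix.mul_assoc]
  apply RCLike.ofReal_injective (K := 𝕜)
  rw [← trace_conjTranspose_mul_self, hS]
  simp only [Matrix.sub_mul, Matrix.mul_sub, Matrix.smul_mul, Matrix.mul_smul, Matrix.one_mul,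
    Matrix.mul_one, trace_sub, trace_smul, trace_one, hP, hPP, smul_eq_mul]
  rcases eq_or_ne (Fintype.card m) 0 with hm | hm
  · simp [t, hm]
  · have : (Fintype.card m : 𝕜) ≠ 0 := Nat.cast_ne_zero.mpr hm
    push_cast [t]
    field_simp
    ring

theorem frobenius_norm_pow_four_div_card_le [DecidableEq m] (F : Matrix m n 𝕜) :
    ‖F‖ ^ 4 / Fintype.card m ≤ ‖Fᴴ * F‖ ^ 2 := by
  rw [← sub_nonneg, ← frobenius_norm_sq_mul_conjTranspose_sub_smul_one]
  positivity

theorem mul_conjTranspose_eq_smul_one_of_frobenius_norm_sq_le [DecidableEq m] (F : Matrix m n 𝕜)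
    (h : ‖Fᴴ * F‖ ^ 2 ≤ ‖F‖ ^ 4 / Fintype.card m) :
    F * Fᴴ = ((‖F‖ ^ 2 / Fintype.card m : ℝ) : 𝕜) • (1 : Matrix m m 𝕜) := by
  rw [← sub_eq_zero, ← norm_eq_zero, ← sq_eq_zero_iff]
  refine le_antisymm ?_ (sq_nonneg _)
  rw [frobenius_norm_sq_mul_conjTranspose_sub_smul_one]
  linarith

theorem frobenius_norm_sq_eq_sum_diag_add_sum_offDiag [SeminormedAddCommGroup α]
    [DecidableEq n] (A : Matrix n n α) :
    ‖A‖ ^ 2 = ∑ i, ‖A i i‖ ^ 2 + ∑ p ∈ (univ : Finset n).offDiag, ‖A p.1 p.2‖ ^ 2 := by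
  rw [frobenius_norm_sq, ← Finset.sum_product' (f := fun i j => ‖A i j‖ ^ 2),
    ← diag_union_offDiag, sum_union (disjoint_diag_offDiag _), sum_diag]

end Matrix

theorem Finset.eq_of_forall_le_of_card_nsmul_le_sum {ι M : Type*} [AddCommMonoid M]
    [PartialOrder M] [IsOrderedCancelAddMonoid M] {s : Finset ι} {f : ι → M} {c : M}
    (hle : ∀ i ∈ s, f i ≤ c) (hsum : #s • c ≤ ∑ i ∈ s, f i) : ∀ i ∈ s, f i = c := by
  refine (sum_eq_sum_iff_of_le hle).1 (le_antisymm (sum_le_sum hle) ?_)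
  rwa [sum_const]

theorem card_offDiag_nsmul_welch_bound_sq {J L : ℕ} (hJ : 0 < J) (hJL : J < L) :
    #(univ : Finset (Fin L)).offDiag • (((L : ℝ) - J) / ((J : ℝ) * ((L : ℝ) - 1)))
      = (L : ℝ) ^ 2 / J - L := by
  have hL : (L : ℝ) - 1 ≠ 0 := by
    rw [sub_ne_zero, Nat.cast_ne_one]; omega
  have hJ' : (J : ℝ) ≠ 0 := by positivity
  rw [offDiag_card, card_univ, Fintype.card_fin, nsmul_eq_mul,
    Nat.cast_sub (Nat.le_mul_self L)]
  push_cast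
  field_simp

theorem welch_equality_etf_general (J L : ℕ) (hJ : 0 < J) (hJL : J < L)
    (F : Matrix (Fin J) (Fin L) ℂ)
    (hnorm : ∀ ℓ : Fin L, ∑ j : Fin J, ‖F j ℓ‖ ^ 2 = 1)
    (hμ : ∀ ℓ ℓ' : Fin L, ℓ ≠ ℓ' →
      ‖∑ j : Fin J, (starRingEnd ℂ) (F j ℓ) * F j ℓ'‖
        ≤ Real.sqrt (((L : ℝ) - J) / ((J : ℝ) * ((L : ℝ) - 1)))) :
    (∀ ℓ ℓ' : Fin L, ℓ ≠ ℓ' →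
      ‖∑ j : Fin J, (starRingEnd ℂ) (F j ℓ) * F j ℓ'‖
        = Real.sqrt (((L : ℝ) - J) / ((J : ℝ) * ((L : ℝ) - 1)))) ∧
    F * Fᴴ = ((L : ℂ) / (J : ℂ)) • (1 : Matrix (Fin J) (Fin J) ℂ) := by
  set c : ℝ := ((L : ℝ) - J) / ((J : ℝ) * ((L : ℝ) - 1))
  have hJL' : (J : ℝ) < L := by exact_mod_cast hJL
  have hc : 0 ≤ c := div_nonneg (by linarith)
    (mul_nonneg J.cast_nonneg (sub_nonneg.2 (Nat.one_le_cast.2 (hJ.trans hJL))))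
  have hgram : ∀ ℓ ℓ', ∑ j, (starRingEnd ℂ) (F j ℓ) * F j ℓ' = (Fᴴ * F) ℓ ℓ' := fun _ _ => rfl
  simp only [hgram] at hμ ⊢
  have hF : ‖F‖ ^ 2 = L := by
    rw [frobenius_norm_sq, sum_comm]
    simp [hnorm]
  have hF4 : ‖F‖ ^ 4 = (L : ℝ) ^ 2 := by rw [← hF]; ring
  have hdiag : ∀ ℓ, ‖(Fᴴ * F) ℓ ℓ‖ = 1 := by
    simp [conjTranspose_mul_self_apply_self, hnorm]
  have hoff_le : ∀ p ∈ (univ : Finset (Fin L)).offDiag, ‖(Fᴴ * F) p.1 p.2‖ ^ 2 ≤ c :=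
    fun p hp => (Real.le_sqrt (norm_nonneg _) hc).1 (hμ _ _ (mem_offDiag.1 hp).2.2)
  have hpot :
      ‖Fᴴ * F‖ ^ 2 = L + ∑ p ∈ (univ : Finset (Fin L)).offDiag, ‖(Fᴴ * F) p.1 p.2‖ ^ 2 := by
    simpa [hdiag] using frobenius_norm_sq_eq_sum_diag_add_sum_offDiag (Fᴴ * F)
  have hlow : (L : ℝ) ^ 2 / J ≤ ‖Fᴴ * F‖ ^ 2 := by
    simpa [hF4] using frobenius_norm_pow_four_div_card_le F
  have hup := sum_le_card_nsmul _ _ _ hoff_le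
  have hbudget := card_offDiag_nsmul_welch_bound_sq hJ hJL
  refine ⟨fun ℓ ℓ' h => ?_, ?_⟩
  · rw [← Finset.eq_of_forall_le_of_card_nsmul_le_sum hoff_le (by linarith) (ℓ, ℓ') (by simpa),
      Real.sqrt_sq (norm_nonneg _)]
  · rw [mul_conjTranspose_eq_smul_one_of_frobenius_norm_sq_le F
      (by rw [hF4, Fintype.card_fin]; linarith), hF, Fintype.card_fin]
    push_cast; rfl

/-- If a unit-norm frame `F ∈ ℂ^{J×L}` (with `J < L ≤ J²`) has mutual coherence
equal to the Welch bound `√((L−J)/(J(L−1)))`, then all off-diagonal Gram entries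
have exactly that modulus and `F` is tight: it is an equiangular tight frame. -/
theorem welch_equality_etf (J L : ℕ) (hJ : 0 < J) (hJL : J < L) (hL : L ≤ J ^ 2)
    (F : Matrix (Fin J) (Fin L) ℂ)
    (hnorm : ∀ ℓ : Fin L, ∑ j : Fin J, ‖F j ℓ‖ ^ 2 = 1)
    (hμ : ∀ ℓ ℓ' : Fin L, ℓ ≠ ℓ' →
      ‖∑ j : Fin J, (starRingEnd ℂ) (F j ℓ) * F j ℓ'‖
        ≤ Real.sqrt (((L : ℝ) - J) / ((J : ℝ) * ((L : ℝ) - 1)))) :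
    (∀ ℓ ℓ' : Fin L, ℓ ≠ ℓ' →
      ‖∑ j : Fin J, (starRingEnd ℂ) (F j ℓ) * F j ℓ'‖
        = Real.sqrt (((L : ℝ) - J) / ((J : ℝ) * ((L : ℝ) - 1)))) ∧
    F * Fᴴ = ((L : ℂ) / (J : ℂ)) • (1 : Matrix (Fin J) (Fin J) ℂ) :=
  welch_equality_etf_general J L hJ hJL F hnorm hμ
end

section
/- In the Bernoulli-Gaussian posterior setting, the diagonal of the posterior covariance of h equals (τ−1)·diag(ĥ ĥ^H) + (1/τ)·Σ Γ (Σ + Γ)^{-1}, where ĥ = Γ(Σ+Γ)^{-1}μ/τ is the posterior mean and τ as defined from the prior activity λ. -/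
open MeasureTheory Finset

/-- Circularly symmetric complex Gaussian density on `ℂ^N` with diagonal
covariance `diag d` and mean `m`. -/
noncomputable def cnDiag (N : ℕ) (d : Fin N → ℝ) (m : Fin N → ℂ) (h : Fin N → ℂ) : ℝ :=
  (Real.pi ^ N * ∏ n, d n)⁻¹ * Real.exp (-(∑ n, ‖h n - m n‖ ^ 2 / d n))

/-!
Completing the square gives `N(h; μ, Σ) N(h; 0, Γ) = N(0; μ, Σ + Γ) N(h; m, V)` with
`m = Γ(Σ + Γ)⁻¹μ` and `V = ΣΓ(Σ + Γ)⁻¹`, so the slab part of the posterior is a diagonal complex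
Gaussian whose mass and second moments are read off coordinatewise: `E|h_n|² = |m_n|² + V_n` per
unit mass. The spike contributes `(1 - λ) N(0; μ, Σ)`, and `N(0; μ, Σ) / N(0; μ, Σ + Γ)` is exactly
the exponential in `τ`, so the normaliser is `C = λ N(0; μ, Σ + Γ) τ`. Hence the posterior second
moment is `(|m_n|² + V_n) / τ` while `ĥ_n = m_n / τ`, and the identity is algebra.
-/

open Real

lemma integral_exp_neg_sq_norm_div {d : ℝ} (hd : 0 < d) :
    ∫ z : ℂ, exp (-(‖z‖ ^ 2 / d)) = π * d := by
  have h := Complex.integral_exp_neg_mul_rpow (p := 2) one_le_two (inv_pos.mpr hd)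
  norm_num [rpow_neg_one] at h
  simpa only [div_eq_inv_mul] using h

lemma integral_sq_norm_mul_exp_neg_sq_norm_div {d : ℝ} (hd : 0 < d) :
    ∫ z : ℂ, ‖z‖ ^ 2 * exp (-(‖z‖ ^ 2 / d)) = π * d ^ 2 := by
  have h := Complex.integral_rpow_mul_exp_neg_mul_rpow (p := 2) (q := 2) one_le_two
    (by norm_num) (inv_pos.mpr hd)
  norm_num [rpow_neg, inv_rpow hd.le] at h
  simpa only [div_eq_inv_mul] using h

noncomputable def cnDensity (d : ℝ) (m z : ℂ) : ℝ :=
  (π * d)⁻¹ * exp (-(‖z - m‖ ^ 2 / d))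

lemma integral_cnDensity {d : ℝ} (hd : 0 < d) (m : ℂ) : ∫ z, cnDensity d m z = 1 := by
  unfold cnDensity
  rw [integral_const_mul, integral_sub_right_eq_self (fun z => exp (-(‖z‖ ^ 2 / d))),
    integral_exp_neg_sq_norm_div hd, inv_mul_cancel₀ (by positivity)]

lemma integral_cnDensity_mul_sq_norm {d : ℝ} (hd : 0 < d) (m : ℂ) :
    ∫ z, cnDensity d m z * ‖z‖ ^ 2 = ‖m‖ ^ 2 + d := by
  -- Symmetrising under `w ↦ -w` and the parallelogram law replace `‖w + m‖²` by `‖w‖² + ‖m‖²`.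
  set φ : ℂ → ℝ := fun w => exp (-(‖w‖ ^ 2 / d))
  have hφ : Integrable φ := .of_integral_ne_zero <| by
    rw [integral_exp_neg_sq_norm_div hd]; positivity
  have hφ_sq : Integrable fun w => ‖w‖ ^ 2 * φ w := .of_integral_ne_zero <| by
    rw [integral_sq_norm_mul_exp_neg_sq_norm_div hd]; positivity
  have hdom : Integrable fun w => 2 * (‖w‖ ^ 2 * φ w) + 2 * ‖m‖ ^ 2 * φ w :=
    (hφ_sq.const_mul 2).add (hφ.const_mul _)
  have hpar (w : ℂ) : ‖w + m‖ ^ 2 * φ w + ‖w - m‖ ^ 2 * φ w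
      = 2 * (‖w‖ ^ 2 * φ w) + 2 * ‖m‖ ^ 2 * φ w := by
    linear_combination φ w * parallelogram_law_with_norm ℝ w m
  have hint (c : ℂ) (hc : ‖c‖ = ‖m‖) : Integrable fun w => ‖w + c‖ ^ 2 * φ w := by
    refine hdom.mono' (by fun_prop) (.of_forall fun w => ?_)
    have hpar_c := parallelogram_law_with_norm ℝ w c
    rw [hc] at hpar_c
    rw [Real.norm_of_nonneg (by positivity)]
    nlinarith [sq_nonneg ‖w - c‖, (exp_pos (-(‖w‖ ^ 2 / d))).le]
  have hsymm : ∫ w, ‖w - m‖ ^ 2 * φ w = ∫ w, ‖w + m‖ ^ 2 * φ w := by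
    rw [← integral_neg_eq_self]
    congr 1 with w
    simp only [φ, norm_neg, ← neg_add']
  have key : ∫ w, ‖w + m‖ ^ 2 * φ w = π * d * (‖m‖ ^ 2 + d) := by
    have := integral_add (hint m rfl) (hint (-m) (norm_neg m))
    simp only [← sub_eq_add_neg, hpar, hsymm] at this
    rw [integral_add (hφ_sq.const_mul 2) (hφ.const_mul _), integral_const_mul, integral_const_mul,
      integral_sq_norm_mul_exp_neg_sq_norm_div hd, integral_exp_neg_sq_norm_div hd] at this
    linarith
  calc ∫ z, cnDensity d m z * ‖z‖ ^ 2
      = (π * d)⁻¹ * ∫ w, ‖w + m‖ ^ 2 * φ w := by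
        rw [← integral_const_mul,
          ← integral_sub_right_eq_self (fun w => (π * d)⁻¹ * (‖w + m‖ ^ 2 * φ w)) m]
        simp only [cnDensity, φ, sub_add_cancel]
        congr 1 with z; ring
    _ = ‖m‖ ^ 2 + d := by rw [key]; field_simp

lemma sq_norm_sub_div_add_sq_norm_div {s g : ℝ} (hs : 0 < s) (hg : 0 < g) (μ z : ℂ) :
    ‖z - μ‖ ^ 2 / s + ‖z‖ ^ 2 / g
      = ‖μ‖ ^ 2 / (s + g) + ‖z - ((g / (s + g) : ℝ) : ℂ) * μ‖ ^ 2 / (s * g / (s + g)) := by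
  simp only [Complex.sq_norm, Complex.normSq_apply, Complex.sub_re, Complex.sub_im,
    Complex.re_ofReal_mul, Complex.im_ofReal_mul]
  field_simp
  ring

lemma cnDensity_mul_cnDensity_zero {s g : ℝ} (hs : 0 < s) (hg : 0 < g) (μ z : ℂ) :
    cnDensity s μ z * cnDensity g 0 z
      = cnDensity (s + g) μ 0 * cnDensity (s * g / (s + g)) (((g / (s + g) : ℝ) : ℂ) * μ) z := by
  have hexp := congrArg (fun t => exp (-t)) (sq_norm_sub_div_add_sq_norm_div hs hg μ z)
  simp only [neg_add, exp_add] at hexp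
  simp only [cnDensity, sub_zero, zero_sub, norm_neg]
  have hcoef : (π * s)⁻¹ * (π * g)⁻¹ = (π * (s + g))⁻¹ * (π * (s * g / (s + g)))⁻¹ := by
    field_simp
  rw [mul_mul_mul_comm, hexp, hcoef, mul_mul_mul_comm]

lemma cnDiag_eq_prod_cnDensity (N : ℕ) (d : Fin N → ℝ) (m h : Fin N → ℂ) :
    cnDiag N d m h = ∏ n, cnDensity (d n) (m n) (h n) := by
  simp only [cnDiag, cnDensity, prod_mul_distrib, ← exp_sum, sum_neg_distrib, prod_inv_distrib,
    prod_const, card_univ, Fintype.card_fin]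

lemma cnDiag_pos {N : ℕ} {d : Fin N → ℝ} (hd : ∀ n, 0 < d n) (m h : Fin N → ℂ) :
    0 < cnDiag N d m h := by
  have := prod_pos fun n (_ : n ∈ univ) => hd n
  unfold cnDiag; positivity

lemma cnDiag_mul_cnDiag_zero {N : ℕ} {s g : Fin N → ℝ} (hs : ∀ n, 0 < s n) (hg : ∀ n, 0 < g n)
    (μ h : Fin N → ℂ) :
    cnDiag N s μ h * cnDiag N g 0 h
      = cnDiag N (s + g) μ 0 * cnDiag N (fun n => s n * g n / (s n + g n))
          (fun n => ((g n / (s n + g n) : ℝ) : ℂ) * μ n) h := by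
  simp only [cnDiag_eq_prod_cnDensity, ← prod_mul_distrib, Pi.add_apply, Pi.zero_apply]
  exact prod_congr rfl fun n _ => cnDensity_mul_cnDensity_zero (hs n) (hg n) (μ n) (h n)

lemma integral_cnDiag {N : ℕ} {d : Fin N → ℝ} (hd : ∀ n, 0 < d n) (m : Fin N → ℂ) :
    ∫ h, cnDiag N d m h = 1 := by
  simp only [cnDiag_eq_prod_cnDensity]
  rw [integral_fintype_prod_volume_eq_prod (fun n => cnDensity (d n) (m n))]
  simp only [integral_cnDensity (hd _), prod_const_one]

lemma integral_cnDiag_mul_sq_norm {N : ℕ} {d : Fin N → ℝ} (hd : ∀ n, 0 < d n) (m : Fin N → ℂ)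
    (n : Fin N) : ∫ h, cnDiag N d m h * ‖h n‖ ^ 2 = ‖m n‖ ^ 2 + d n := by
  have hfactor (h : Fin N → ℂ) : cnDiag N d m h * ‖h n‖ ^ 2
      = ∏ k, cnDensity (d k) (m k) (h k) * (if k = n then ‖h k‖ ^ 2 else 1) := by
    rw [prod_mul_distrib, prod_ite_eq', if_pos (mem_univ n), cnDiag_eq_prod_cnDensity]
  simp_rw [hfactor]
  rw [integral_fintype_prod_volume_eq_prod
    (fun k z => cnDensity (d k) (m k) z * (if k = n then ‖z‖ ^ 2 else 1))]
  rw [prod_eq_single n]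
  · simp only [if_pos, integral_cnDensity_mul_sq_norm (hd n)]
  · intro k _ hk
    simp only [if_neg hk, mul_one, integral_cnDensity (hd k)]
  · simp

lemma cnDiag_zero_eq_mul_exp {N : ℕ} {s g : Fin N → ℝ} (hs : ∀ n, 0 < s n) (hg : ∀ n, 0 < g n)
    (μ : Fin N → ℂ) :
    cnDiag N s μ 0 = cnDiag N (s + g) μ 0 *
      exp (-((∑ n, ‖μ n‖ ^ 2 * (1 / s n - 1 / (s n + g n))) - log (∏ n, (g n / s n + 1)))) := by
  have hratio (n : Fin N) : cnDensity (s n) (μ n) 0 = cnDensity (s n + g n) (μ n) 0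
      * ((g n / s n + 1) / exp (‖μ n‖ ^ 2 * (1 / s n - 1 / (s n + g n)))) := by
    have := hs n; have := hg n
    simp only [cnDensity, zero_sub, norm_neg]
    have hcoef : (π * (s n + g n))⁻¹ * (g n / s n + 1) = (π * s n)⁻¹ := by field_simp; ring
    have hexponent : -(‖μ n‖ ^ 2 / (s n + g n)) - ‖μ n‖ ^ 2 * (1 / s n - 1 / (s n + g n))
        = -(‖μ n‖ ^ 2 / s n) := by field_simp; ring
    rw [← hcoef, ← hexponent, exp_sub]
    ring
  rw [neg_sub, exp_sub, exp_log (prod_pos fun n _ => by have := hs n; have := hg n; positivity),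
    exp_sum, ← prod_div_distrib, cnDiag_eq_prod_cnDensity, cnDiag_eq_prod_cnDensity,
    ← prod_mul_distrib]
  exact prod_congr rfl fun n _ => hratio n

/-- Diagonal of the Bernoulli-Gaussian posterior covariance:
`E[|h_n|²|obs] − |ĥ_n|² = (τ−1)|ĥ_n|² + (1/τ)·s_n g_n/(s_n+g_n)`, where
`ĥ = Γ(Σ+Γ)⁻¹μ/τ` is the posterior mean (diagonal case). -/
theorem bg_posterior_variance (N : ℕ) (s g : Fin N → ℝ)
    (hs : ∀ n, 0 < s n) (hg : ∀ n, 0 < g n)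
    (lam : ℝ) (hlam0 : 0 < lam) (hlam1 : lam < 1) (μv : Fin N → ℂ)
    (τ : ℝ)
    (hτ : τ = 1 + ((1 - lam) / lam) *
        Real.exp (-((∑ n, ‖μv n‖ ^ 2 * (1 / s n - 1 / (s n + g n)))
          - Real.log (∏ n, (g n / s n + 1)))))
    (C : ℝ)
    (hC : C = lam * (∫ h : Fin N → ℂ, cnDiag N s μv h * cnDiag N g 0 h)
        + (1 - lam) * cnDiag N s μv 0)
    (hhat : Fin N → ℂ)
    (hhat_def : ∀ n, hhat n = ((g n / (s n + g n) / τ : ℝ) : ℂ) * μv n) :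
    ∀ n : Fin N,
      (lam / C) * (∫ h : Fin N → ℂ, cnDiag N s μv h * cnDiag N g 0 h
          * ‖h n‖ ^ 2)
        - ‖hhat n‖ ^ 2
      = (τ - 1) * ‖hhat n‖ ^ 2 + (1 / τ) * (s n * g n / (s n + g n)) := by
  intro n
  have hv (k : Fin N) : 0 < s k * g k / (s k + g k) := by
    have := hs k; have := hg k; positivity
  have hZ : 0 < cnDiag N (s + g) μv 0 := cnDiag_pos (fun k => add_pos (hs k) (hg k)) μv 0
  have hτ_pos : 0 < τ := by
    have : 0 < (1 - lam) / lam := div_pos (by linarith) hlam0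
    rw [hτ]; positivity
  have hC' : C = lam * cnDiag N (s + g) μv 0 * τ := by
    simp only [hC, cnDiag_mul_cnDiag_zero hs hg, integral_const_mul, integral_cnDiag hv,
      cnDiag_zero_eq_mul_exp hs hg μv, hτ]
    field_simp
  have hmoment : ∫ h, cnDiag N s μv h * cnDiag N g 0 h * ‖h n‖ ^ 2
      = cnDiag N (s + g) μv 0
        * ((g n / (s n + g n)) ^ 2 * ‖μv n‖ ^ 2 + s n * g n / (s n + g n)) := by
    simp only [cnDiag_mul_cnDiag_zero hs hg, mul_assoc, integral_const_mul,
      integral_cnDiag_mul_sq_norm hv, norm_mul, Complex.norm_real, Real.norm_eq_abs, mul_pow,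
      sq_abs]
  have hhat_sq : ‖hhat n‖ ^ 2 = (g n / (s n + g n) / τ) ^ 2 * ‖μv n‖ ^ 2 := by
    rw [hhat_def, norm_mul, Complex.norm_real, Real.norm_eq_abs, mul_pow, sq_abs]
  rw [hmoment, hC', hhat_sq]
  field_simp
  ring
end
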